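/- For the systematic binary Hamming code Ham(r,2) with r > 3, every achievable demand vector satisfies λ_1 + ⋯ + λ_k ≤ k = 2^r − 1 − r, and this bound is achieved by the vector (1,1,…,1). -/

import Mathlib

/-- `R` is a recovery set for data symbol `i` with respect to the generator matrix `G`. -/
def IsRecoverySet {k n : ℕ} {F : Type*} [Field F] (G : Matrix (Fin k) (Fin n) F)
    (i : Fin k) (R : Finset (Fin n)) : Prop :=
  (Pi.single i 1 : Fin k → F) ∈ Submodule.span F ((fun j => fun a => G a j) '' (R : Set (Fin n)))

/-- The demand vector `lam` is achievable for the storage system encoded by `G` with unit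
server capacities: there is a nonnegative allocation of each demand `lam i` over the recovery
sets of symbol `i` such that every node serves total load at most `1`. -/
def Achievable {k n : ℕ} {F : Type*} [Field F] (G : Matrix (Fin k) (Fin n) F)
    (lam : Fin k → ℝ) : Prop :=
  ∃ w : Fin k → Finset (Fin n) → ℝ,
    (∀ i R, 0 ≤ w i R) ∧
    (∀ i R, w i R ≠ 0 → IsRecoverySet G i R) ∧
    (∀ i, ∑ R : Finset (Fin n), w i R = lam i) ∧
    (∀ v : Fin n, (∑ i : Fin k, ∑ R : Finset (Fin n), if v ∈ R then w i R else 0) ≤ 1)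

/-! The `k` systematic columns meet every recovery set, so each unit of demand puts at least one
unit of load on a systematic node, whence `∑ λᵢ ≤ k`; the singleton recovery sets of the
systematic columns attain this. If a recovery set `R` of symbol `i` avoided all systematic
columns, then `z = x - e_{j i}`, for `x` supported on `R` with `G x = eᵢ`, would be a nonzero
codeword of the dual (simplex) code, hence of weight `2^(r-1)`, while being supported on the `r`
parity positions and `j i`; but `2^(r-1) > r + 1` for `r > 3`. -/

open Finset Matrix

section ServiceRate

variable {k n : ℕ} {F : Type*} [Field F] {G : Matrix (Fin k) (Fin n) F}

theorem IsRecoverySet.exists_mulVec_eq {i : Fin k} {R : Finset (Fin n)}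
    (hR : IsRecoverySet G i R) :
    ∃ x : Fin n → F, (∀ j ∉ R, x j = 0) ∧ G *ᵥ x = Pi.single i 1 := by
  classical
  obtain ⟨c, hc⟩ := (Submodule.mem_span_image_finset_iff_exists_fun' F).1 hR
  refine ⟨fun j => if j ∈ R then c j else 0, fun j hj => if_neg hj, ?_⟩
  rw [← hc]
  ext a
  simp [mulVec, dotProduct, Finset.sum_apply, mul_comm]

theorem Achievable.sum_le_card_of_forall_isRecoverySet {C : Finset (Fin n)}
    (hC : ∀ i R, IsRecoverySet G i R → ∃ v ∈ C, v ∈ R) {lam : Fin k → ℝ}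
    (h : Achievable G lam) : ∑ i, lam i ≤ #C := by
  obtain ⟨w, hw_nonneg, hw_rec, hw_sum, hw_load⟩ := h
  have hw_le (i : Fin k) (R : Finset (Fin n)) :
      w i R ≤ ∑ v ∈ C, if v ∈ R then w i R else 0 := by
    have hterm_nonneg (v : Fin n) : 0 ≤ if v ∈ R then w i R else 0 := by
      split_ifs
      exacts [hw_nonneg i R, le_rfl]
    rcases eq_or_ne (w i R) 0 with h0 | h0
    · exact h0 ▸ sum_nonneg fun v _ => hterm_nonneg v
    · obtain ⟨v, hvC, hvR⟩ := hC i R (hw_rec i R h0)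
      calc w i R = if v ∈ R then w i R else 0 := (if_pos hvR).symm
        _ ≤ _ := single_le_sum (fun u _ => hterm_nonneg u) hvC
  calc ∑ i, lam i = ∑ i, ∑ R, w i R := by simp only [hw_sum]
    _ ≤ ∑ i, ∑ R, ∑ v ∈ C, if v ∈ R then w i R else 0 := by gcongr with i _ R; exact hw_le i R
    _ = ∑ v ∈ C, ∑ i, ∑ R, if v ∈ R then w i R else 0 := by
      simp only [sum_comm (s := C)]
    _ ≤ ∑ _v ∈ C, 1 := sum_le_sum fun v _ => hw_load v
    _ = #C := by simp

theorem Matrix.injective_of_col_eq_single {j : Fin k → Fin n}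
    (hj : ∀ a, G.col (j a) = Pi.single a 1) : Function.Injective j := by
  intro a b hab
  by_contra hne
  have h := congrFun ((hj a).symm.trans (hab ▸ hj b)) a
  simp [hne] at h

theorem achievable_one_of_col_eq_single {j : Fin k → Fin n}
    (hj : ∀ a, G.col (j a) = Pi.single a 1) : Achievable G fun _ => 1 := by
  classical
  have hj_inj := Matrix.injective_of_col_eq_single hj
  refine ⟨fun i R => if R = {j i} then 1 else 0, fun i R => by positivity, fun i R hR => ?_,
    fun i => by simp, fun v => ?_⟩
  · obtain rfl : R = {j i} := by by_contra h; simp [h] at hR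
    exact Submodule.subset_span ⟨j i, by simp, hj i⟩
  · have hload (i : Fin k) :
        (∑ R : Finset (Fin n), if v ∈ R then (if R = {j i} then (1 : ℝ) else 0) else 0) =
          if j i = v then 1 else 0 := by
      rw [Fintype.sum_eq_single {j i} fun R hR => by simp [hR]]
      simp [eq_comm]
    calc ∑ i, ∑ R, (if v ∈ R then (if R = {j i} then (1 : ℝ) else 0) else 0)
        = ∑ u ∈ univ.image j, if u = v then 1 else 0 := by
          rw [sum_image fun a _ b _ h => hj_inj h]
          exact sum_congr rfl fun i _ => hload i
      _ ≤ ∑ u, if u = v then 1 else 0 := sum_le_univ_sum_of_nonneg fun u => by positivity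
      _ = 1 := by simp

end ServiceRate

section LinearAlgebra

variable {K : Type*} [Field K]

open Module in
theorem Module.Dual.card_filter_ne_zero [Fintype K] [DecidableEq K] {V : Type*} [AddCommGroup V]
    [Module K V] [Fintype V] {ψ : Module.Dual K V} (hψ : ψ ≠ 0) :
    #{v | ψ v ≠ 0} = (Fintype.card K - 1) * Fintype.card K ^ (finrank K V - 1) := by
  classical
  have hker := Module.Dual.finrank_ker_add_one_of_ne_zero hψ
  have hcard_ker : #{v | ψ v = 0} = Fintype.card K ^ finrank K (LinearMap.ker ψ) := by
    rw [← card_eq_pow_finrank, ← Fintype.card_subtype]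
    exact Fintype.card_congr (Equiv.refl _)
  have hcard : #{v | ψ v = 0} + #{v | ψ v ≠ 0} = Fintype.card V :=
    card_filter_add_card_filter_not _
  rw [card_eq_pow_finrank (K := K), hcard_ker, ← hker] at hcard
  rw [← hker, Nat.add_sub_cancel, Nat.sub_one_mul, ← pow_succ']
  omega

variable {m n : Type*} [Fintype n]

theorem Matrix.exists_dual_eq_of_dotProduct_eq_zero [DecidableEq n] (H : Matrix m n K)
    {z : n → K} (hz : ∀ c, H *ᵥ c = 0 → z ⬝ᵥ c = 0) :
    ∃ ψ : Module.Dual K (m → K), ∀ j, z j = ψ (H.col j) := by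
  have hφ : dotProductBilin K K z ∈ (LinearMap.ker H.mulVecLin).dualAnnihilator :=
    (Submodule.mem_dualAnnihilator _).2 fun c hc => hz c hc
  rw [← LinearMap.range_dualMap_eq_dualAnnihilator_ker] at hφ
  obtain ⟨ψ, hψ⟩ := hφ
  refine ⟨ψ, fun j => ?_⟩
  have := LinearMap.congr_fun hψ (Pi.single j 1)
  simpa [mulVec_single_one] using this.symm

theorem Matrix.dotProduct_eq_zero_of_mem_span_rows [Fintype m] {G : Matrix m n K} {z c : n → K}
    (hz : G *ᵥ z = 0) (hc : c ∈ Submodule.span K (Set.range G)) : z ⬝ᵥ c = 0 := by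
  change c ∈ Submodule.span K (Set.range G.row) at hc
  rw [← range_vecMulLinear] at hc
  obtain ⟨y, rfl⟩ := hc
  rw [vecMulLinear_apply, dotProduct_comm, ← dotProduct_mulVec, hz, dotProduct_zero]

theorem card_filter_ne_zero_le_hammingNorm [DecidableEq K] {V ι : Type*} [AddCommGroup V]
    [Module K V] [Fintype V] [DecidableEq V] [Fintype ι] {f : ι → V} (hf : ∀ v ≠ 0, ∃ i, f i = v)
    (ψ : Module.Dual K V) :
    #{v | ψ v ≠ 0} ≤ hammingNorm fun i => ψ (f i) := by
  calc #{v | ψ v ≠ 0} ≤ #(({i | ψ (f i) ≠ 0} : Finset ι).image f) := by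
        refine card_le_card fun v hv => ?_
        have hv : ψ v ≠ 0 := (mem_filter.1 hv).2
        obtain ⟨i, rfl⟩ := hf v fun h => hv (h ▸ map_zero ψ)
        exact mem_image_of_mem f (mem_filter.2 ⟨mem_univ i, hv⟩)
    _ ≤ hammingNorm fun i => ψ (f i) := card_image_le

end LinearAlgebra

theorem add_one_lt_two_pow_sub_one {r : ℕ} (hr : 3 < r) : r + 1 < 2 ^ (r - 1) := by
  obtain ⟨m, rfl⟩ : ∃ m, r = m + 4 := ⟨r - 4, by omega⟩
  have := Nat.lt_two_pow_self (n := m)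
  rw [show m + 4 - 1 = m + 3 by omega, pow_add]
  omega

section Hamming

variable {r n k : ℕ} {H : Matrix (Fin r) (Fin n) (ZMod 2)} {G : Matrix (Fin k) (Fin n) (ZMod 2)}

theorem pow_le_hammingNorm_of_mulVec_eq_zero (hcols : ∀ v ≠ 0, ∃ j, H.col j = v)
    (hspan : Submodule.span (ZMod 2) (Set.range G) = LinearMap.ker H.mulVecLin)
    {z : Fin n → ZMod 2} (hz : G *ᵥ z = 0) (hz0 : z ≠ 0) : 2 ^ (r - 1) ≤ hammingNorm z := by
  obtain ⟨ψ, hψ⟩ := H.exists_dual_eq_of_dotProduct_eq_zero fun c hc =>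
    dotProduct_eq_zero_of_mem_span_rows hz (hspan ▸ LinearMap.mem_ker.2 hc)
  have hψ0 : ψ ≠ 0 := by
    rintro rfl
    exact hz0 (funext hψ)
  calc 2 ^ (r - 1) = #{v | ψ v ≠ 0} := by simp [ψ.card_filter_ne_zero hψ0]
    _ ≤ hammingNorm fun j => ψ (H.col j) := card_filter_ne_zero_le_hammingNorm hcols ψ
    _ = hammingNorm z := by rw [← funext hψ]

theorem exists_systematic_mem_of_isRecoverySet (hr : 3 < r) (hnk : n = k + r)
    (hcols : ∀ v ≠ 0, ∃ j, H.col j = v)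
    (hspan : Submodule.span (ZMod 2) (Set.range G) = LinearMap.ker H.mulVecLin)
    {j : Fin k → Fin n} (hj : ∀ a, G.col (j a) = Pi.single a 1) {i : Fin k} {R : Finset (Fin n)}
    (hR : IsRecoverySet G i R) : ∃ a, j a ∈ R := by
  by_contra! hR_avoid
  obtain ⟨x, hx_supp, hx⟩ := hR.exists_mulVec_eq
  set z := x - Pi.single (j i) 1
  have hz : G *ᵥ z = 0 := by rw [mulVec_sub, hx, mulVec_single_one, hj, sub_self]
  have hz_ji : z (j i) ≠ 0 := by simp [z, hx_supp _ (hR_avoid i)]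
  have hsupp : ({l | z l ≠ 0} : Finset (Fin n)) ⊆ insert (j i) (univ \ univ.image j) := by
    intro l hl
    rcases eq_or_ne l (j i) with rfl | hl_ne
    · exact mem_insert_self _ _
    · have hlR : l ∈ R := by
        by_contra hlR
        simp [z, hl_ne, hx_supp l hlR] at hl
      refine mem_insert_of_mem (mem_sdiff.2 ⟨mem_univ l, ?_⟩)
      rw [mem_image]
      rintro ⟨a, -, rfl⟩
      exact hR_avoid a hlR
  have hweight_le : hammingNorm z ≤ r + 1 := by
    refine (card_le_card hsupp).trans ((card_insert_le _ _).trans ?_)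
    rw [card_sdiff_of_subset (subset_univ _), card_univ, Fintype.card_fin,
      card_image_of_injective _ (Matrix.injective_of_col_eq_single hj), card_univ,
      Fintype.card_fin]
    omega
  have hweight_ge := pow_le_hammingNorm_of_mulVec_eq_zero hcols hspan hz fun h => hz_ji (h ▸ rfl)
  exact absurd (hweight_ge.trans hweight_le) (add_one_lt_two_pow_sub_one hr).not_ge

end Hamming

/-- For the systematic binary Hamming code `Ham(r,2)` with `r > 3`
(parity-check matrix `H` whose columns are exactly the nonzero vectors of `F_2^r`, systematic
generator matrix `G` whose rows span the kernel of `H`), every achievable demand vector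
satisfies `λ_1 + ⋯ + λ_k ≤ k = 2^r - 1 - r`, and this bound is achieved by `(1, 1, …, 1)`. -/
theorem stmt10 {r n k : ℕ} (hr : 3 < r) (hn : n = 2 ^ r - 1) (hk : k = 2 ^ r - 1 - r)
    (H : Matrix (Fin r) (Fin n) (ZMod 2))
    (hcols : ∀ v : Fin r → ZMod 2, v ≠ 0 → ∃! j : Fin n, (fun a => H a j) = v)
    (G : Matrix (Fin k) (Fin n) (ZMod 2))
    (hspan : Submodule.span (ZMod 2) (Set.range G) = LinearMap.ker H.mulVecLin)
    (hsys : ∀ a : Fin k, ∃ j : Fin n, (fun b => G b j) = Pi.single a 1) :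
    (∀ lam : Fin k → ℝ, Achievable G lam → ∑ i : Fin k, lam i ≤ (k : ℝ)) ∧
      Achievable G (fun _ => 1) := by
  choose j hj using hsys
  have hnk : n = k + r := by
    have := Nat.lt_two_pow_self (n := r)
    omega
  refine ⟨fun lam hlam => ?_, achievable_one_of_col_eq_single hj⟩
  have hcover (i : Fin k) (R : Finset (Fin n)) (hR : IsRecoverySet G i R) :
      ∃ v ∈ univ.image j, v ∈ R := by
    obtain ⟨a, ha⟩ :=
      exists_systematic_mem_of_isRecoverySet hr hnk (fun v hv => (hcols v hv).exists) hspan hj hR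
    exact ⟨j a, mem_image_of_mem j (mem_univ a), ha⟩
  calc ∑ i, lam i ≤ #(univ.image j) := hlam.sum_le_card_of_forall_isRecoverySet hcover
    _ ≤ k := by exact_mod_cast card_image_le.trans_eq (card_fin k)
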